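/- arXiv:1201.2524 — 3 statements merged into one kernel-verified Lean document; each statement's English description precedes it below -/
import Mathlib

section
/- Define S(n) = Σ_{k=0}^{n} binom(n,k) (−1)^k (1/2)_{n−k} (1/2)_k / (3/2)_n. Then for even n = 2m with m ≥ 1, S(2m) = ∏_{j=1}^{m} (2m+2j) / ∏_{j=0}^{m} (2m+2j+1), i.e. S(2m) = (2m+2)(2m+4)⋯(4m) / ((2m+1)(2m+3)⋯(4m+1)). Equivalently S(2m) = 2^m (2m)! / (m! (2m+1)(2m+3)⋯(4m+1)). -/
/-!
Write `a k = (x)_k / k!` for the coefficients of `(1 - t)^(-x)`. The sum is `(2m)!` times the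
coefficient of `t^(2m)` in `(1 - t)^(-x) (1 + t)^(-x) = (1 - t²)^(-x)`, namely `(2m)! (x)_m / m!`.
Instead of power series we use the recurrence `(k + 1) a (k + 1) = (x + k) a k`: trading the
weights `i` and `j` along the antidiagonal `i + j = n + 2` for these recurrences, twice, gives
`(n + 2) c (n + 2) = (n + 2x) c n` for `c n = ∑_{i + j = n} (-1)^i a i a j`, the recurrence of the
coefficients of `(1 - t²)^(-x)`. At `x = 1/2` the denominator splits as
`(3/2)_{2m} = (1/2)_m (2m+1)(2m+3)⋯(4m+1) / 2^m`, and the closed forms follow.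
-/

open Finset Polynomial Nat

theorem ascPochhammer_eval_eq_prod_range {R : Type*} [CommSemiring R] (n : ℕ) (x : R) :
    (ascPochhammer R n).eval x = ∏ j ∈ range n, (x + j) := by
  induction n with
  | zero => simp
  | succ n ih => rw [ascPochhammer_succ_eval, ih, prod_range_succ]

theorem ascPochhammer_eval_add {R : Type*} [CommSemiring R] (m n : ℕ) (x : R) :
    (ascPochhammer R (m + n)).eval x =
      (ascPochhammer R m).eval x * (ascPochhammer R n).eval (x + m) := by
  simp only [ascPochhammer_eval_eq_prod_range, prod_range_add, Nat.cast_add, add_assoc]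

section AntidiagonalSums

variable {R : Type*} [CommRing R]

theorem sum_antidiagonal_succ_fst_mul {u r : ℕ → R}
    (hu : ∀ k : ℕ, (k + 1 : R) * u (k + 1) = r k * u k) (v : ℕ → R) (n : ℕ) :
    ∑ p ∈ antidiagonal (n + 1), (p.1 : R) * (u p.1 * v p.2) =
      ∑ p ∈ antidiagonal n, r p.1 * (u p.1 * v p.2) := by
  rw [Nat.sum_antidiagonal_succ]
  simp [← mul_assoc, hu]

theorem sum_antidiagonal_succ_snd_mul (u : ℕ → R) {v r : ℕ → R}
    (hv : ∀ k : ℕ, (k + 1 : R) * v (k + 1) = r k * v k) (n : ℕ) :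
    ∑ p ∈ antidiagonal (n + 1), (p.2 : R) * (u p.1 * v p.2) =
      ∑ p ∈ antidiagonal n, r p.2 * (u p.1 * v p.2) := by
  rw [Nat.sum_antidiagonal_succ']
  simp [mul_left_comm _ (u _), hv]

theorem sum_antidiagonal_mul_of_recurrence {x : R} {a b : ℕ → R}
    (ha : ∀ k : ℕ, (k + 1 : R) * a (k + 1) = (x + k) * a k)
    (hb : ∀ k : ℕ, (k + 1 : R) * b (k + 1) = -(x + k) * b k) (n : ℕ) :
    (n + 2 : R) * ∑ p ∈ antidiagonal (n + 2), b p.1 * a p.2 =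
      (n + 2 * x) * ∑ p ∈ antidiagonal n, b p.1 * a p.2 := by
  have cast_sum : ∀ {N : ℕ}, ∀ p ∈ antidiagonal N, (p.1 + p.2 : R) = N := fun p hp => by
    rw [← Nat.cast_add, HasAntidiagonal.mem_antidiagonal.mp hp]
  calc (n + 2 : R) * ∑ p ∈ antidiagonal (n + 2), b p.1 * a p.2
      = ∑ p ∈ antidiagonal (n + 2), (p.1 : R) * (b p.1 * a p.2) +
          ∑ p ∈ antidiagonal (n + 2), (p.2 : R) * (b p.1 * a p.2) := by
        rw [← sum_add_distrib, mul_sum]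
        refine sum_congr rfl fun p hp => ?_
        rw [← add_mul, cast_sum p hp]; push_cast; ring
    _ = ∑ p ∈ antidiagonal (n + 1), -(x + p.1) * (b p.1 * a p.2) +
          ∑ p ∈ antidiagonal (n + 1), (x + p.2) * (b p.1 * a p.2) := by
        rw [sum_antidiagonal_succ_fst_mul hb, sum_antidiagonal_succ_snd_mul b ha]
    _ = ∑ p ∈ antidiagonal (n + 1), (p.2 : R) * (b p.1 * a p.2) -
          ∑ p ∈ antidiagonal (n + 1), (p.1 : R) * (b p.1 * a p.2) := by
        rw [← sum_add_distrib, ← sum_sub_distrib]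
        exact sum_congr rfl fun _ _ => by ring
    _ = ∑ p ∈ antidiagonal n, (x + p.2) * (b p.1 * a p.2) -
          ∑ p ∈ antidiagonal n, -(x + p.1) * (b p.1 * a p.2) := by
        rw [sum_antidiagonal_succ_fst_mul hb, sum_antidiagonal_succ_snd_mul b ha]
    _ = (n + 2 * x) * ∑ p ∈ antidiagonal n, b p.1 * a p.2 := by
        rw [← sum_sub_distrib, mul_sum]
        refine sum_congr rfl fun p hp => ?_
        rw [← cast_sum p hp]; ring

end AntidiagonalSums

section Field

variable {K : Type*} [Field K] [CharZero K]

theorem sum_antidiagonal_two_mul_neg_one_pow_mul {x : K} {a : ℕ → K} (ha₀ : a 0 = 1)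
    (ha : ∀ k : ℕ, (k + 1 : K) * a (k + 1) = (x + k) * a k) (m : ℕ) :
    ∑ p ∈ antidiagonal (2 * m), (-1) ^ p.1 * a p.1 * a p.2 = a m := by
  have hb : ∀ k : ℕ, (k + 1 : K) * ((-1) ^ (k + 1) * a (k + 1)) = -(x + k) * ((-1) ^ k * a k) :=
    fun k => by linear_combination (-(-1 : K) ^ k) * ha k
  induction m with
  | zero => simp [ha₀]
  | succ m ih =>
    have hrec := sum_antidiagonal_mul_of_recurrence (b := fun k => (-1) ^ k * a k) ha hb (2 * m)
    rw [ih] at hrec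
    have hm : (2 * m + 2 : K) ≠ 0 := by norm_cast
    apply mul_left_cancel₀ hm
    push_cast at hrec ⊢
    linear_combination hrec - 2 * ha m

theorem sum_range_choose_mul_neg_one_pow_mul_ascPochhammer (x : K) (m : ℕ) :
    ∑ k ∈ range (2 * m + 1),
        ((2 * m).choose k : K) * (-1) ^ k * (ascPochhammer K (2 * m - k)).eval x *
          (ascPochhammer K k).eval x =
      (2 * m)! * (ascPochhammer K m).eval x / m ! := by
  have ha : ∀ k : ℕ, (k + 1 : K) * ((ascPochhammer K (k + 1)).eval x / (k + 1)!) =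
      (x + k) * ((ascPochhammer K k).eval x / k !) := fun k => by
    rw [ascPochhammer_succ_eval, Nat.factorial_succ]
    push_cast
    field_simp
  have key := sum_antidiagonal_two_mul_neg_one_pow_mul
    (a := fun k => (ascPochhammer K k).eval x / k !) (by simp) ha m
  simp only [Nat.sum_antidiagonal_eq_sum_range_succ_mk] at key
  rw [mul_div_assoc, ← key, mul_sum]
  refine sum_congr rfl fun k hk => ?_
  have hk : k ≤ 2 * m := Nat.lt_succ_iff.mp (mem_range.mp hk)
  rw [Nat.cast_choose K hk]
  field_simp

end Field

theorem ascPochhammer_eval_three_halves (m : ℕ) :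
    (ascPochhammer ℚ (2 * m)).eval (3 / 2) =
      (ascPochhammer ℚ m).eval (1 / 2) * (∏ j ∈ range (m + 1), ((2 * m + 2 * j + 1 : ℕ) : ℚ)) /
        2 ^ m := by
  have h_succ : (ascPochhammer ℚ (2 * m + 1)).eval (1 / 2) =
      1 / 2 * (ascPochhammer ℚ (2 * m)).eval (3 / 2) := by
    rw [ascPochhammer_succ_left]; norm_num
  have h_split := ascPochhammer_eval_add m (m + 1) (1 / 2 : ℚ)
  have h_odd : ∏ j ∈ range (m + 1), ((2 * m + 2 * j + 1 : ℕ) : ℚ) =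
      2 ^ (m + 1) * (ascPochhammer ℚ (m + 1)).eval (1 / 2 + m : ℚ) := by
    calc ∏ j ∈ range (m + 1), ((2 * m + 2 * j + 1 : ℕ) : ℚ)
        = ∏ j ∈ range (m + 1), 2 * (1 / 2 + m + j : ℚ) :=
          prod_congr rfl fun j _ => by push_cast; ring
      _ = _ := by rw [prod_mul_distrib, prod_const, card_range, ascPochhammer_eval_eq_prod_range]
  rw [show m + (m + 1) = 2 * m + 1 by ring, h_succ] at h_split
  rw [h_odd, eq_div_iff (by positivity)]
  linear_combination (2 * 2 ^ m : ℚ) * h_split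

theorem prod_range_two_mul_add_two_mul_succ (m : ℕ) :
    ∏ j ∈ range m, ((2 * m + 2 * (j + 1) : ℕ) : ℚ) = 2 ^ m * (2 * m)! / m ! := by
  have h : m ! * ∏ j ∈ range m, (2 * m + 2 * (j + 1)) = 2 ^ m * (2 * m)! := by
    calc m ! * ∏ j ∈ range m, (2 * m + 2 * (j + 1))
        = m ! * ∏ j ∈ range m, 2 * (m + 1 + j) := by
          congr 1; exact prod_congr rfl fun j _ => by ring
      _ = 2 ^ m * (2 * m)! := by
          rw [prod_mul_distrib, prod_const, card_range, ← Nat.ascFactorial_eq_prod_range,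
            mul_left_comm, Nat.factorial_mul_ascFactorial, two_mul]
  rw [eq_div_iff (by positivity), mul_comm, ← Nat.cast_prod]
  exact_mod_cast h

theorem stmt_7_general (m : ℕ) :
    (∑ k ∈ Finset.range (2 * m + 1),
      ((2 * m).choose k : ℚ) * (-1) ^ k *
        (ascPochhammer ℚ (2 * m - k)).eval (1 / 2) * (ascPochhammer ℚ k).eval (1 / 2)
        / (ascPochhammer ℚ (2 * m)).eval (3 / 2))
      = (∏ j ∈ Finset.range m, ((2 * m + 2 * (j + 1) : ℕ) : ℚ))
        / (∏ j ∈ Finset.range (m + 1), ((2 * m + 2 * j + 1 : ℕ) : ℚ)) ∧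
    (∏ j ∈ Finset.range m, ((2 * m + 2 * (j + 1) : ℕ) : ℚ))
        / (∏ j ∈ Finset.range (m + 1), ((2 * m + 2 * j + 1 : ℕ) : ℚ))
      = 2 ^ m * ((2 * m).factorial : ℚ)
        / ((m.factorial : ℚ) * ∏ j ∈ Finset.range (m + 1), ((2 * m + 2 * j + 1 : ℕ) : ℚ)) := by
  have h_half : (ascPochhammer ℚ m).eval (1 / 2) ≠ 0 := (ascPochhammer_pos m _ (by norm_num)).ne'
  have h_odd : ∏ j ∈ range (m + 1), ((2 * m + 2 * j + 1 : ℕ) : ℚ) ≠ 0 := by positivity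
  have h_sum : ∑ k ∈ range (2 * m + 1),
      ((2 * m).choose k : ℚ) * (-1) ^ k *
        (ascPochhammer ℚ (2 * m - k)).eval (1 / 2) * (ascPochhammer ℚ k).eval (1 / 2)
        / (ascPochhammer ℚ (2 * m)).eval (3 / 2) =
      2 ^ m * (2 * m)! / (m ! * ∏ j ∈ range (m + 1), ((2 * m + 2 * j + 1 : ℕ) : ℚ)) := by
    rw [← sum_div, sum_range_choose_mul_neg_one_pow_mul_ascPochhammer,
      ascPochhammer_eval_three_halves]
    field_simp
  have h_prod : (∏ j ∈ range m, ((2 * m + 2 * (j + 1) : ℕ) : ℚ)) /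
        ∏ j ∈ range (m + 1), ((2 * m + 2 * j + 1 : ℕ) : ℚ) =
      2 ^ m * (2 * m)! / (m ! * ∏ j ∈ range (m + 1), ((2 * m + 2 * j + 1 : ℕ) : ℚ)) := by
    rw [prod_range_two_mul_add_two_mul_succ, div_div]
  exact ⟨h_sum.trans h_prod.symm, h_prod⟩

/-- For even `n = 2m`, `m ≥ 1`, the moment sum
`S(2m) = ∑_{k=0}^{2m} C(2m,k) (-1)^k (1/2)_{2m-k} (1/2)_k / (3/2)_{2m}` equals
`(2m+2)(2m+4)⋯(4m) / ((2m+1)(2m+3)⋯(4m+1))`, which also equals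
`2^m (2m)! / (m! (2m+1)(2m+3)⋯(4m+1))`. -/
theorem stmt_7 (m : ℕ) (hm : 1 ≤ m) :
    (∑ k ∈ Finset.range (2 * m + 1),
      ((2 * m).choose k : ℚ) * (-1) ^ k *
        (ascPochhammer ℚ (2 * m - k)).eval (1 / 2) * (ascPochhammer ℚ k).eval (1 / 2)
        / (ascPochhammer ℚ (2 * m)).eval (3 / 2))
      = (∏ j ∈ Finset.range m, ((2 * m + 2 * (j + 1) : ℕ) : ℚ))
        / (∏ j ∈ Finset.range (m + 1), ((2 * m + 2 * j + 1 : ℕ) : ℚ)) ∧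
    (∏ j ∈ Finset.range m, ((2 * m + 2 * (j + 1) : ℕ) : ℚ))
        / (∏ j ∈ Finset.range (m + 1), ((2 * m + 2 * j + 1 : ℕ) : ℚ))
      = 2 ^ m * ((2 * m).factorial : ℚ)
        / ((m.factorial : ℚ) * ∏ j ∈ Finset.range (m + 1), ((2 * m + 2 * j + 1 : ℕ) : ℚ)) :=
  stmt_7_general m
end

section
/- Let A be a normal N×N complex matrix with eigenvalues λ₁,…,λ_N, and let m = (1/N) tr A. If ψ is a random unit vector uniformly distributed on the unit sphere of ℂ^N and X = ⟨ψ|A|ψ⟩, then E[X] = m and E[|X − m|²] = (1/(N(N+1))) Σ_{j=1}^N |λ_j − m|². -/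
/-!
Write `q_j U = ‖U j c‖ ^ 2` for the squared moduli of a column of `U`. Since `A = V diag(λ) Vᴴ`,
`X U = ∑ j, q_j (Vᴴ * U) • λ j`, and left invariance of the Haar measure removes `Vᴴ`, so
everything reduces to the first two moments of `q`. Permutation matrices make all `∫ q_j`
equal, hence equal to `1 / N` because `∑ j, q_j = 1` on the unitary group; they also make all
`∫ q_j q_k` with `k ≠ j` equal. The unitaries `1 + (i - 1) P`, with `P` the projection onto
`e_j + u e_k` (`‖u‖ = 1`), mix two coordinates; averaging the choices `u = 1` and `u = i` gives
`∫ q_j ^ 2 = 2 ∫ q_j q_k`. With `∑ k, ∫ q_j q_k = ∫ q_j = 1 / N` this pins down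
`∫ q_j q_k = (1 + δ_jk) / (N (N + 1))`, and the variance is this quadratic form evaluated at the
centred eigenvalues.
-/

open Matrix MeasureTheory

noncomputable instance matrixMeasurableSpace (m n : Type*) :
    MeasurableSpace (Matrix m n ℂ) :=
  inferInstanceAs (MeasurableSpace (m → n → ℂ))

instance Matrix.secondCountableTopology {m n : Type*} [Countable m] [Countable n] :
    SecondCountableTopology (Matrix m n ℂ) :=
  inferInstanceAs (SecondCountableTopology (m → n → ℂ))

instance Matrix.borelSpace {m n : Type*} [Countable m] [Countable n] :
    BorelSpace (Matrix m n ℂ) :=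
  inferInstanceAs (BorelSpace (m → n → ℂ))

theorem IsStarProjection.one_add_smul_mem_unitary {R A : Type*} [CommRing R] [StarRing R]
    [Ring A] [StarRing A] [Algebra R A] [StarModule R A] {p : A} (hp : IsStarProjection p)
    {z : R} (hz : z ∈ unitary R) : 1 + (z - 1) • p ∈ unitary A := by
  have key : ∀ w : R, w * star w = 1 → (1 + (w - 1) • p) * (1 + (star w - 1) • p) = 1 := by
    intro w hw
    have hw' : (w - 1) * (star w - 1) = -((w - 1) + (star w - 1)) := by linear_combination hw
    simp only [mul_add, add_mul, one_mul, mul_one, smul_mul_smul_comm, hp.isIdempotentElem.eq,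
      hw']
    module
  have hstar : star (1 + (z - 1) • p) = 1 + (star z - 1) • p := by
    rw [star_add, star_one, star_smul, hp.isSelfAdjoint.star_eq, star_sub, star_one]
  refine Unitary.mem_iff.2 ⟨?_, ?_⟩ <;> rw [hstar]
  · simpa using key (star z) (by simpa using Unitary.star_mul_self_of_mem hz)
  · exact key z (Unitary.mul_star_self_of_mem hz)

theorem Complex.norm_add_sq_mul_norm_sub_sq_add_I_mul (x y : ℂ) :
    ‖x + y‖ ^ 2 * ‖x - y‖ ^ 2 + ‖x + Complex.I * y‖ ^ 2 * ‖x - Complex.I * y‖ ^ 2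
      = 2 * (‖x‖ ^ 2 * ‖x‖ ^ 2) + 2 * (‖y‖ ^ 2 * ‖y‖ ^ 2) := by
  simp only [Complex.sq_norm, Complex.normSq_apply, Complex.add_re, Complex.add_im,
    Complex.sub_re, Complex.sub_im, Complex.mul_re, Complex.mul_im, Complex.I_re, Complex.I_im]
  ring

namespace Matrix

theorem isStarProjection_smul_vecMulVec {K n : Type*} [Field K] [StarRing K] [Fintype n]
    {w : n → K} (hw : star w ⬝ᵥ w ≠ 0) :
    IsStarProjection ((star w ⬝ᵥ w)⁻¹ • vecMulVec w (star w)) := by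
  constructor
  · rw [IsIdempotentElem, smul_mul_smul_comm, vecMulVec_mul_vecMulVec, vecMulVec_smul, smul_smul,
      inv_mul_cancel_right₀ hw]
  · rw [IsSelfAdjoint, star_smul, star_inv₀, ← star_dotProduct, star_eq_conjTranspose,
      conjTranspose_vecMulVec, star_star]

section phaseAlong

variable {K n : Type*} [Field K] [StarRing K] [Fintype n] [DecidableEq n]

noncomputable def phaseAlong (z : K) (w : n → K) : Matrix n n K :=
  1 + (z - 1) • ((star w ⬝ᵥ w)⁻¹ • vecMulVec w (star w))

theorem phaseAlong_mem_unitaryGroup {z : K} (hz : z ∈ unitary K) {w : n → K}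
    (hw : star w ⬝ᵥ w ≠ 0) : phaseAlong z w ∈ unitaryGroup n K :=
  (isStarProjection_smul_vecMulVec hw).one_add_smul_mem_unitary hz

theorem phaseAlong_mul_apply (z : K) (w : n → K) (U : Matrix n n K) (i c : n) :
    (phaseAlong z w * U) i c =
      U i c + (z - 1) * (star w ⬝ᵥ w)⁻¹ * w i * (star w ⬝ᵥ fun l => U l c) := by
  simp [phaseAlong, add_mul, vecMulVec_mul, vecMulVec_apply, vecMul, dotProduct, mul_assoc]

theorem star_single_add_single_dotProduct (j k : n) (u : K) (v : n → K) :
    star (Pi.single j 1 + Pi.single k u) ⬝ᵥ v = v j + star u * v k := by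
  simp [star_add, add_dotProduct, single_dotProduct]

end phaseAlong

variable {n : Type*} [Fintype n] [DecidableEq n]

theorem swap_mem_unitaryGroup {K : Type*} [CommRing K] [StarRing K] (i j : n) :
    swap K i j ∈ unitaryGroup n K := by
  rw [mem_unitaryGroup_iff, star_eq_conjTranspose, conjTranspose_swap, swap_mul_self]

section RCLike

variable {𝕜 : Type*} [RCLike 𝕜]

theorem sum_norm_sq_apply_of_mem_unitaryGroup {U : Matrix n n 𝕜} (hU : U ∈ unitaryGroup n 𝕜)
    (c : n) : ∑ j, ‖U j c‖ ^ 2 = 1 := by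
  have h := congr_fun₂ (mem_unitaryGroup_iff'.1 hU) c c
  simp only [mul_apply, star_apply, RCLike.star_def, RCLike.conj_mul, one_apply_eq] at h
  exact_mod_cast h

theorem isCompact_unitaryGroup : IsCompact (unitaryGroup n 𝕜 : Set (Matrix n n 𝕜)) := by
  have hball : (unitaryGroup n 𝕜 : Set (Matrix n n 𝕜)) ⊆
      Set.univ.pi fun _ => Set.univ.pi fun _ => Metric.closedBall 0 1 := by
    intro U hU i _ j _
    simpa using entry_norm_bound_of_unitary hU i j
  exact (isCompact_univ_pi fun _ => isCompact_univ_pi fun _ => isCompact_closedBall _ _)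
    |>.of_isClosed_subset (isClosed_unitary (R := Matrix n n 𝕜)) hball

theorem star_dotProduct_mulVec_conj_diagonal (V : Matrix n n 𝕜) (lam x : n → 𝕜) :
    star x ⬝ᵥ (V * diagonal lam * Vᴴ) *ᵥ x = ∑ j, ‖(Vᴴ *ᵥ x) j‖ ^ 2 • lam j := by
  rw [← mulVec_mulVec, ← mulVec_mulVec, dotProduct_mulVec, ← conjTranspose_conjTranspose V,
    ← star_mulVec, conjTranspose_conjTranspose]
  refine Finset.sum_congr rfl fun j _ => ?_
  rw [Pi.star_apply, mulVec_diagonal, RCLike.real_smul_eq_coe_mul, RCLike.ofReal_pow,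
    ← RCLike.conj_mul, RCLike.star_def]
  ring

end RCLike

theorem star_single_add_single_dotProduct_self {j k : n} (hjk : j ≠ k) {u : ℂ} (hu : ‖u‖ = 1) :
    star (Pi.single j 1 + Pi.single k u) ⬝ᵥ (Pi.single j 1 + Pi.single k u) = (2 : ℂ) := by
  rw [star_single_add_single_dotProduct]
  simp [Pi.single_eq_of_ne hjk, Pi.single_eq_of_ne hjk.symm, Complex.conj_mul', hu]
  norm_num

theorem norm_sq_phaseAlong_I_mul_apply_mul {j k : n} (hjk : j ≠ k) {u : ℂ} (hu : ‖u‖ = 1)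
    (U : Matrix n n ℂ) (c : n) :
    ‖(phaseAlong Complex.I (Pi.single j 1 + Pi.single k u : n → ℂ) * U) j c‖ ^ 2 *
        ‖(phaseAlong Complex.I (Pi.single j 1 + Pi.single k u : n → ℂ) * U) k c‖ ^ 2 =
      ‖U j c + Complex.I * star u * U k c‖ ^ 2 * ‖U j c - Complex.I * star u * U k c‖ ^ 2 / 4 := by
  have hu' : starRingEnd ℂ u * u = 1 := by rw [Complex.conj_mul', hu]; norm_num
  set w : n → ℂ := Pi.single j 1 + Pi.single k u
  have hw := star_single_add_single_dotProduct j k u (n := n)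
  have hww := star_single_add_single_dotProduct_self hjk hu
  have hj : (phaseAlong Complex.I w * U) j c =
      (1 + Complex.I) / 2 * (U j c + Complex.I * star u * U k c) := by
    rw [phaseAlong_mul_apply, hww, hw]
    simp only [w, Pi.add_apply, Pi.single_eq_same, Pi.single_eq_of_ne hjk, add_zero,
      RCLike.star_def]
    linear_combination (-(starRingEnd ℂ u) * U k c / 2) * Complex.I_sq
  have hk : (phaseAlong Complex.I w * U) k c =
      (1 + Complex.I) / 2 * (Complex.I * u) * (U j c - Complex.I * star u * U k c) := by
    rw [phaseAlong_mul_apply, hww, hw]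
    simp only [w, Pi.add_apply, Pi.single_eq_same, Pi.single_eq_of_ne hjk.symm, zero_add,
      RCLike.star_def]
    linear_combination (-(u * U j c) / 2 + (Complex.I + 1) * u * starRingEnd ℂ u * U k c / 2) *
      Complex.I_sq - U k c * hu'
  have hα : ‖(1 + Complex.I) / 2‖ ^ 2 = 1 / 2 := by
    rw [Complex.sq_norm]
    simp [Complex.normSq_apply]
    norm_num
  rw [hj, hk]
  simp only [norm_mul, mul_pow, hα, Complex.norm_I, hu, mul_one]
  ring

end Matrix

section IsUnitaryHaar

variable {n : Type*} [Fintype n] [DecidableEq n]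

structure IsUnitaryHaar (μ : Measure (Matrix n n ℂ)) : Prop where
  measure_unitaryGroup : μ {U | U ∈ unitaryGroup n ℂ} = 1
  map_mul_left : ∀ W ∈ unitaryGroup n ℂ, μ.map (W * ·) = μ

namespace IsUnitaryHaar

variable {μ : Measure (Matrix n n ℂ)}

theorem integral_comp_mul_left (hμ : IsUnitaryHaar μ) {E : Type*} [NormedAddCommGroup E]
    [NormedSpace ℝ E] {W : Matrix n n ℂ} (hW : W ∈ unitaryGroup n ℂ) {f : Matrix n n ℂ → E}
    (hf : AEStronglyMeasurable f μ) : ∫ U, f (W * U) ∂μ = ∫ U, f U ∂μ := by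
  have hmap := hμ.map_mul_left W hW
  conv_rhs => rw [← hmap]
  exact (integral_map (continuous_const_mul W).aemeasurable (by rwa [hmap])).symm

theorem integral_norm_add_mul_sq_mul_norm_sub_mul_sq (hμ : IsUnitaryHaar μ) {j k : n}
    (hjk : j ≠ k) {s : ℂ} (hs : ‖s‖ = 1) (c : n) :
    ∫ U, ‖U j c + s * U k c‖ ^ 2 * ‖U j c - s * U k c‖ ^ 2 ∂μ
      = 4 * ∫ U, ‖U j c‖ ^ 2 * ‖U k c‖ ^ 2 ∂μ := by
  set u := Complex.I * star s
  have hu : ‖u‖ = 1 := by simp [u, hs]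
  have hsu : Complex.I * star u = s := by simp [u, ← mul_assoc]
  have hW := phaseAlong_mem_unitaryGroup (z := Complex.I) (by simp [Unitary.mem_iff])
    (w := (Pi.single j 1 + Pi.single k u : n → ℂ))
    (by rw [star_single_add_single_dotProduct_self hjk hu]; norm_num)
  rw [← hμ.integral_comp_mul_left hW (f := fun U => ‖U j c‖ ^ 2 * ‖U k c‖ ^ 2)
    (by fun_prop : Measurable _).aestronglyMeasurable, ← integral_const_mul]
  refine integral_congr_ae (Filter.Eventually.of_forall fun U => ?_)
  dsimp only
  rw [norm_sq_phaseAlong_I_mul_apply_mul hjk hu, hsu]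
  ring

variable [IsProbabilityMeasure μ]

theorem ae_mem_unitaryGroup (hμ : IsUnitaryHaar μ) : ∀ᵐ U ∂μ, U ∈ unitaryGroup n ℂ := by
  refine (ae_iff_measure_eq ?_).2 (by rw [measure_univ, hμ.measure_unitaryGroup])
  exact (isClosed_unitary (R := Matrix n n ℂ)).measurableSet.nullMeasurableSet

theorem integrable_of_continuous (hμ : IsUnitaryHaar μ) {E : Type*} [NormedAddCommGroup E]
    {f : Matrix n n ℂ → E} (hf : Continuous f) : Integrable f μ := by
  obtain ⟨C, hC⟩ := isCompact_unitaryGroup.exists_bound_of_continuousOn hf.continuousOn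
  exact Integrable.of_bound hf.aestronglyMeasurable C (hμ.ae_mem_unitaryGroup.mono hC)

theorem integral_norm_sq_apply (hμ : IsUnitaryHaar μ) (j c : n) :
    ∫ U, ‖U j c‖ ^ 2 ∂μ = (Fintype.card n : ℝ)⁻¹ := by
  have hswap : ∀ k, ∫ U, ‖U k c‖ ^ 2 ∂μ = ∫ U, ‖U j c‖ ^ 2 ∂μ := fun k => by
    simpa using hμ.integral_comp_mul_left (swap_mem_unitaryGroup j k) (f := fun U => ‖U j c‖ ^ 2)
      (by fun_prop : Measurable _).aestronglyMeasurable
  have hsum : ∑ k, ∫ U, ‖U k c‖ ^ 2 ∂μ = 1 := by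
    rw [← integral_finsetSum _ fun k _ => hμ.integrable_of_continuous (by fun_prop),
      integral_congr_ae (hμ.ae_mem_unitaryGroup.mono fun U hU =>
        sum_norm_sq_apply_of_mem_unitaryGroup hU c)]
    simp
  rw [Finset.sum_congr rfl fun k _ => hswap k, Finset.sum_const, Finset.card_univ,
    nsmul_eq_mul] at hsum
  exact eq_inv_of_mul_eq_one_right hsum

theorem sum_integral_norm_sq_mul_norm_sq (hμ : IsUnitaryHaar μ) (j c : n) :
    ∑ k, ∫ U, ‖U j c‖ ^ 2 * ‖U k c‖ ^ 2 ∂μ = (Fintype.card n : ℝ)⁻¹ := by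
  rw [← integral_finsetSum _ fun k _ => hμ.integrable_of_continuous (by fun_prop),
    ← hμ.integral_norm_sq_apply j c]
  refine integral_congr_ae (hμ.ae_mem_unitaryGroup.mono fun U hU => ?_)
  dsimp only
  rw [← Finset.mul_sum, sum_norm_sq_apply_of_mem_unitaryGroup hU c, mul_one]

theorem integral_norm_sq_mul_self_eq_two_mul (hμ : IsUnitaryHaar μ) {j k : n} (hjk : j ≠ k)
    (c : n) : ∫ U, ‖U j c‖ ^ 2 * ‖U j c‖ ^ 2 ∂μ = 2 * ∫ U, ‖U j c‖ ^ 2 * ‖U k c‖ ^ 2 ∂μ := by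
  have hswap : ∫ U, ‖U k c‖ ^ 2 * ‖U k c‖ ^ 2 ∂μ = ∫ U, ‖U j c‖ ^ 2 * ‖U j c‖ ^ 2 ∂μ := by
    simpa using hμ.integral_comp_mul_left (swap_mem_unitaryGroup j k)
      (f := fun U => ‖U j c‖ ^ 2 * ‖U j c‖ ^ 2) (by fun_prop : Measurable _).aestronglyMeasurable
  have h8 : 8 * ∫ U, ‖U j c‖ ^ 2 * ‖U k c‖ ^ 2 ∂μ = 4 * ∫ U, ‖U j c‖ ^ 2 * ‖U j c‖ ^ 2 ∂μ :=
    calc 8 * ∫ U, ‖U j c‖ ^ 2 * ‖U k c‖ ^ 2 ∂μ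
        = ∫ U, ‖U j c + U k c‖ ^ 2 * ‖U j c - U k c‖ ^ 2 ∂μ
          + ∫ U, ‖U j c + Complex.I * U k c‖ ^ 2 * ‖U j c - Complex.I * U k c‖ ^ 2 ∂μ := by
          have h1 := hμ.integral_norm_add_mul_sq_mul_norm_sub_mul_sq hjk norm_one c
          simp only [one_mul] at h1
          rw [h1, hμ.integral_norm_add_mul_sq_mul_norm_sub_mul_sq hjk Complex.norm_I c]
          ring
      _ = ∫ U, 2 * (‖U j c‖ ^ 2 * ‖U j c‖ ^ 2) + 2 * (‖U k c‖ ^ 2 * ‖U k c‖ ^ 2) ∂μ := by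
          rw [← integral_add (hμ.integrable_of_continuous (by fun_prop))
            (hμ.integrable_of_continuous (by fun_prop))]
          simp only [Complex.norm_add_sq_mul_norm_sub_sq_add_I_mul]
      _ = 4 * ∫ U, ‖U j c‖ ^ 2 * ‖U j c‖ ^ 2 ∂μ := by
          rw [integral_add (hμ.integrable_of_continuous (by fun_prop))
            (hμ.integrable_of_continuous (by fun_prop)), integral_const_mul, integral_const_mul,
            hswap]
          ring
  linarith

theorem integral_norm_sq_mul_norm_sq_of_ne (hμ : IsUnitaryHaar μ) {j k : n} (hjk : j ≠ k)
    (c : n) :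
    ∫ U, ‖U j c‖ ^ 2 * ‖U k c‖ ^ 2 ∂μ = ((Fintype.card n : ℝ) * (Fintype.card n + 1))⁻¹ := by
  have hsame : ∀ l ∈ Finset.univ.erase j,
      ∫ U, ‖U j c‖ ^ 2 * ‖U l c‖ ^ 2 ∂μ = ∫ U, ‖U j c‖ ^ 2 * ‖U k c‖ ^ 2 ∂μ := fun l hl => by
    simpa [swap_mul_of_ne hjk (Finset.ne_of_mem_erase hl).symm] using
      hμ.integral_comp_mul_left (swap_mem_unitaryGroup k l)
        (f := fun U => ‖U j c‖ ^ 2 * ‖U k c‖ ^ 2) (by fun_prop : Measurable _).aestronglyMeasurable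
  have hn : 0 < Fintype.card n := Fintype.card_pos_iff.2 ⟨c⟩
  have hsum := hμ.sum_integral_norm_sq_mul_norm_sq j c
  rw [← Finset.add_sum_erase _ _ (Finset.mem_univ j), Finset.sum_congr rfl hsame,
    Finset.sum_const, Finset.card_erase_of_mem (Finset.mem_univ j), Finset.card_univ,
    nsmul_eq_mul, Nat.cast_pred hn, hμ.integral_norm_sq_mul_self_eq_two_mul hjk c] at hsum
  have hN : (0 : ℝ) < Fintype.card n := Nat.cast_pos.2 hn
  field_simp
  field_simp at hsum
  linarith

theorem integral_norm_sq_mul_norm_sq (hμ : IsUnitaryHaar μ) (j k c : n) :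
    ∫ U, ‖U j c‖ ^ 2 * ‖U k c‖ ^ 2 ∂μ =
      (if j = k then 2 else 1) / ((Fintype.card n : ℝ) * (Fintype.card n + 1)) := by
  rcases ne_or_eq j k with hjk | rfl
  · rw [hμ.integral_norm_sq_mul_norm_sq_of_ne hjk, if_neg hjk, one_div]
  have hn : 0 < Fintype.card n := Fintype.card_pos_iff.2 ⟨c⟩
  have hsum := hμ.sum_integral_norm_sq_mul_norm_sq j c
  rw [← Finset.add_sum_erase _ _ (Finset.mem_univ j),
    Finset.sum_congr rfl fun l hl =>
      hμ.integral_norm_sq_mul_norm_sq_of_ne (Finset.ne_of_mem_erase hl).symm c,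
    Finset.sum_const, Finset.card_erase_of_mem (Finset.mem_univ j), Finset.card_univ,
    nsmul_eq_mul, Nat.cast_pred hn] at hsum
  have hN : (0 : ℝ) < Fintype.card n := Nat.cast_pos.2 hn
  rw [if_pos rfl, eq_sub_of_add_eq hsum]
  field_simp
  ring

theorem integral_norm_sum_smul_sq (hμ : IsUnitaryHaar μ) {E : Type*} [NormedAddCommGroup E]
    [InnerProductSpace ℝ E] (a : n → E) (c : n) :
    ∫ U, ‖∑ j, ‖U j c‖ ^ 2 • a j‖ ^ 2 ∂μ =
      (‖∑ j, a j‖ ^ 2 + ∑ j, ‖a j‖ ^ 2) / ((Fintype.card n : ℝ) * (Fintype.card n + 1)) := by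
  have hexpand : ∀ x : n → ℝ,
      ‖∑ j, x j • a j‖ ^ 2 = ∑ j, ∑ k, x j * x k * inner ℝ (a j) (a k) := fun x => by
    simp_rw [← real_inner_self_eq_norm_sq, sum_inner, inner_sum, real_inner_smul_left,
      real_inner_smul_right, mul_assoc]
  have hinner : ∀ j, ∫ U, ∑ k, ‖U j c‖ ^ 2 * ‖U k c‖ ^ 2 * inner ℝ (a j) (a k) ∂μ =
      ∑ k, (∫ U, ‖U j c‖ ^ 2 * ‖U k c‖ ^ 2 ∂μ) * inner ℝ (a j) (a k) := fun j => by
    rw [integral_finsetSum _ fun k _ => hμ.integrable_of_continuous (by fun_prop)]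
    simp_rw [integral_mul_const]
  have hsplit : ∀ (j k : n) (x D : ℝ),
      (if j = k then 2 else 1) / D * x = x / D + if j = k then x / D else 0 := by
    intro j k x D
    split_ifs <;> ring
  simp_rw [hexpand]
  rw [integral_finsetSum _ fun j _ => integrable_finsetSum _ fun k _ =>
    hμ.integrable_of_continuous (by fun_prop)]
  simp_rw [hinner, hμ.integral_norm_sq_mul_norm_sq, hsplit, Finset.sum_add_distrib,
    Finset.sum_ite_eq, Finset.mem_univ, if_true, ← Finset.sum_div, ← real_inner_self_eq_norm_sq,
    sum_inner, inner_sum, add_div]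

theorem integral_sum_smul (hμ : IsUnitaryHaar μ) {E : Type*} [NormedAddCommGroup E]
    [NormedSpace ℝ E] [CompleteSpace E] (a : n → E) (c : n) :
    ∫ U, ∑ j, ‖U j c‖ ^ 2 • a j ∂μ = (Fintype.card n : ℝ)⁻¹ • ∑ j, a j := by
  rw [integral_finsetSum _ fun j _ => hμ.integrable_of_continuous (by fun_prop), Finset.smul_sum]
  simp_rw [integral_smul_const, hμ.integral_norm_sq_apply]

theorem integral_norm_sum_smul_sub_sq (hμ : IsUnitaryHaar μ) {E : Type*} [NormedAddCommGroup E]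
    [InnerProductSpace ℝ E] (a : n → E) (c : n) :
    ∫ U, ‖∑ j, ‖U j c‖ ^ 2 • a j - (Fintype.card n : ℝ)⁻¹ • ∑ j, a j‖ ^ 2 ∂μ =
      ((Fintype.card n : ℝ) * (Fintype.card n + 1))⁻¹ *
        ∑ j, ‖a j - (Fintype.card n : ℝ)⁻¹ • ∑ j, a j‖ ^ 2 := by
  set m := (Fintype.card n : ℝ)⁻¹ • ∑ j, a j
  have hcentre : ∀ U ∈ unitaryGroup n ℂ,
      ∑ j, ‖U j c‖ ^ 2 • a j - m = ∑ j, ‖U j c‖ ^ 2 • (a j - m) := fun U hU => by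
    rw [Finset.sum_congr rfl fun j _ => smul_sub _ _ _, Finset.sum_sub_distrib,
      ← Finset.sum_smul, sum_norm_sq_apply_of_mem_unitaryGroup hU c, one_smul]
  have hmean : ∑ j, (a j - m) = 0 := by
    have hN : (Fintype.card n : ℝ) ≠ 0 := Nat.cast_ne_zero.2 (Fintype.card_pos_iff.2 ⟨c⟩).ne'
    rw [Finset.sum_sub_distrib, Finset.sum_const, Finset.card_univ, ← Nat.cast_smul_eq_nsmul ℝ,
      smul_smul, mul_inv_cancel₀ hN, one_smul, sub_self]
  rw [integral_congr_ae (hμ.ae_mem_unitaryGroup.mono fun U hU => by rw [hcentre U hU]),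
    hμ.integral_norm_sum_smul_sq, hmean, norm_zero, zero_pow two_ne_zero, zero_add,
    div_eq_inv_mul]

end IsUnitaryHaar

end IsUnitaryHaar

/-- Let `A = V diag(λ) V†` be a normal `N × N` complex matrix and
`m = tr A / N`.  For `ψ` a uniformly random unit vector of `ℂ^N` (realized as
the first column of a Haar-random unitary `U`) and `X = ⟨ψ|A|ψ⟩`, one has
`E[X] = m` and `E[|X - m|²] = (1/(N(N+1))) ∑_j |λ_j - m|²`. -/
theorem stmt_11 (N : ℕ) (hN : 0 < N)
    (μ : Measure (Matrix (Fin N) (Fin N) ℂ)) [IsProbabilityMeasure μ]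
    (hsupp : μ {U | U ∈ Matrix.unitaryGroup (Fin N) ℂ} = 1)
    (hinv : ∀ W ∈ Matrix.unitaryGroup (Fin N) ℂ,
      Measure.map (fun U => W * U) μ = μ)
    (A V : Matrix (Fin N) (Fin N) ℂ) (lam : Fin N → ℂ)
    (hV : V ∈ Matrix.unitaryGroup (Fin N) ℂ)
    (hA : A = V * Matrix.diagonal lam * Vᴴ) :
    let m : ℂ := A.trace / N
    let ψ : Matrix (Fin N) (Fin N) ℂ → (Fin N → ℂ) := fun U i => U i ⟨0, hN⟩
    let X : Matrix (Fin N) (Fin N) ℂ → ℂ := fun U => star (ψ U) ⬝ᵥ A.mulVec (ψ U)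
    (∫ U, X U ∂μ = m) ∧
    (∫ U, ‖X U - m‖ ^ 2 ∂μ) = (1 / (N * (N + 1)) : ℝ) * ∑ j, ‖lam j - m‖ ^ 2 := by
  intro m ψ X
  have hμ : IsUnitaryHaar μ := ⟨hsupp, hinv⟩
  have hVH : Vᴴ ∈ unitaryGroup (Fin N) ℂ := Unitary.star_mem hV
  set f : Matrix (Fin N) (Fin N) ℂ → ℂ := fun U => ∑ j, ‖U j ⟨0, hN⟩‖ ^ 2 • lam j
  have hX : X = fun U => f (Vᴴ * U) := by
    funext U
    simp only [X, ψ, f, hA, star_dotProduct_mulVec_conj_diagonal]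
    rfl
  have hm : m = (N : ℝ)⁻¹ • ∑ j, lam j := by
    rw [Complex.real_smul, Complex.ofReal_inv, Complex.ofReal_natCast, ← div_eq_inv_mul,
      ← trace_diagonal]
    show A.trace / N = _
    rw [hA, trace_mul_cycle, ← star_eq_conjTranspose, mem_unitaryGroup_iff'.1 hV, one_mul]
  constructor
  · rw [hX, hμ.integral_comp_mul_left hVH (by fun_prop : Continuous f).aestronglyMeasurable,
      hμ.integral_sum_smul, Fintype.card_fin, hm]
  · have h := hμ.integral_norm_sum_smul_sub_sq lam ⟨0, hN⟩
    rw [Fintype.card_fin] at h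
    rw [hX, hμ.integral_comp_mul_left hVH (f := fun U => ‖f U - m‖ ^ 2)
      (by fun_prop : Continuous _).aestronglyMeasurable, hm, one_div]
    exact h
end

section
/- Let A be a real symmetric N×N matrix (or any N×N matrix diagonalizable by a real orthogonal matrix, with real eigenvalues λ₁,…,λ_N), and m = (1/N) tr A. If x is uniformly distributed on the real unit sphere S^{N−1} and X = ⟨x, Ax⟩, then E[X] = m and E[(X − m)²] = (2/(N(N+2))) Σ_{j=1}^N (λ_j − m)². -/
/-!
The normalized surface measure on the sphere is invariant under linear isometries, and a
reflection maps any unit vector to any other, so the law of `⟪x, u⟫` does not depend on the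
unit vector `u`. Summing `⟪x, b i⟫ ^ 2 = 1` over an orthonormal basis gives
`E ⟪x, u⟫ ^ 2 = 1 / N`. For orthonormal `u, w`, comparing with the unit vectors `(u ± w) / √2`
gives `3 E (⟪x, u⟫ ^ 2 ⟪x, w⟫ ^ 2) = E ⟪x, u⟫ ^ 4`, and integrating `(∑ ⟪x, b i⟫ ^ 2) ^ 2 = 1`
then yields `E ⟪x, u⟫ ^ 4 = 3 / (N (N + 2))`. Finally `X = ∑ λ i ⟪x, v i⟫ ^ 2` for the columns
`v i` of `V`, and on the sphere `X - m = ∑ (λ i - m) ⟪x, v i⟫ ^ 2`; expanding gives both moments.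
-/

open Matrix MeasureTheory Metric Set
open scoped RealInnerProductSpace Pointwise

section toSphere

variable {E : Type*} [NormedAddCommGroup E] [NormedSpace ℝ E] [MeasurableSpace E] [BorelSpace E]

theorem MeasureTheory.Measure.integral_toSphere_comp_linearIsometryEquiv {G : Type*}
    [NormedAddCommGroup G] [NormedSpace ℝ G] (μ : Measure E) (L : E ≃ₗᵢ[ℝ] E)
    (hL : MeasurePreserving L μ μ) (f : E → G) :
    ∫ x, f (L x) ∂μ.toSphere = ∫ x, f x ∂μ.toSphere := by
  let g : sphere (0 : E) 1 ≃ₜ sphere (0 : E) 1 :=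
    { toFun x := ⟨L x, by simp⟩
      invFun x := ⟨L.symm x, by simp⟩
      left_inv x := by simp
      right_inv x := by simp
      continuous_toFun := by fun_prop
      continuous_invFun := by fun_prop }
  have hg : MeasurePreserving g μ.toSphere μ.toSphere := by
    refine ⟨g.continuous.measurable, Measure.ext fun s hs => ?_⟩
    have hcone : Ioo (0 : ℝ) 1 • ((↑) '' (g ⁻¹' s) : Set E) = L ⁻¹' (Ioo (0 : ℝ) 1 • (↑) '' s) := by
      ext x
      constructor
      · rintro ⟨a, ha, _, ⟨z, hz, rfl⟩, rfl⟩
        exact ⟨a, ha, _, ⟨g z, hz, rfl⟩, by simp [g]⟩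
      · rintro ⟨a, ha, _, ⟨z, hz, rfl⟩, hx⟩
        refine ⟨a, ha, _, ⟨g.symm z, by simpa using hz, rfl⟩, ?_⟩
        simpa [g] using congr_arg L.symm hx
    rw [Measure.map_apply g.continuous.measurable hs, μ.toSphere_apply' hs,
      μ.toSphere_apply' (g.continuous.measurable hs), hcone,
      hL.measure_preimage_emb L.toHomeomorph.measurableEmbedding]
  exact hg.integral_comp g.measurableEmbedding (fun x => f x)

end toSphere

section uniformSphere

variable (E : Type*) [NormedAddCommGroup E] [InnerProductSpace ℝ E] [FiniteDimensional ℝ E]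
  [MeasurableSpace E] [BorelSpace E]

noncomputable def uniformSphere : Measure (sphere (0 : E) 1) :=
  ((volume : Measure E).toSphere univ)⁻¹ • (volume : Measure E).toSphere

instance [Nontrivial E] : IsProbabilityMeasure (uniformSphere E) := by
  unfold uniformSphere
  exact ⟨ENNReal.inv_mul_cancel (Measure.measure_univ_ne_zero.mpr (Measure.toSphere_ne_zero _))
    (measure_ne_top _ _)⟩

variable {E} {G : Type*} [NormedAddCommGroup G] [NormedSpace ℝ G]

theorem integral_comp_linearIsometryEquiv_uniformSphere (L : E ≃ₗᵢ[ℝ] E) (f : E → G) :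
    ∫ x, f (L x) ∂uniformSphere E = ∫ x, f x ∂uniformSphere E := by
  simp only [uniformSphere, integral_smul_measure,
    Measure.integral_toSphere_comp_linearIsometryEquiv _ L L.measurePreserving]

theorem integral_comp_inner_uniformSphere (g : ℝ → G) {u w : E} (hu : ‖u‖ = 1) (hw : ‖w‖ = 1) :
    ∫ x, g ⟪(x : E), u⟫ ∂uniformSphere E = ∫ x, g ⟪(x : E), w⟫ ∂uniformSphere E := by
  set R := (ℝ ∙ (u - w))ᗮ.reflection
  have hRu : R u = w := Submodule.reflection_sub (hu.trans hw.symm)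
  rw [← integral_comp_linearIsometryEquiv_uniformSphere R (fun y => g ⟪y, w⟫)]
  simp_rw [← hRu, LinearIsometryEquiv.inner_map_map]

variable [Nontrivial E]

theorem integrable_uniformSphere {f : sphere (0 : E) 1 → ℝ} (hf : Continuous f) :
    Integrable f (uniformSphere E) :=
  hf.integrable_of_hasCompactSupport (.of_compactSpace f)

theorem integral_inner_sq_uniformSphere {u : E} (hu : ‖u‖ = 1) :
    ∫ x, ⟪(x : E), u⟫ ^ 2 ∂uniformSphere E = 1 / Module.finrank ℝ E := by
  set b := stdOrthonormalBasis ℝ E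
  have hsum : ∫ x, ∑ i, ⟪(x : E), b i⟫ ^ 2 ∂uniformSphere E = 1 := by
    simp [b.sum_sq_inner_left]
  rw [integral_finsetSum _ fun i _ => integrable_uniformSphere (by fun_prop)] at hsum
  simp only [integral_comp_inner_uniformSphere (· ^ 2) (b.orthonormal.1 _) hu, Finset.sum_const,
    Finset.card_univ, Fintype.card_fin, nsmul_eq_mul] at hsum
  have hn : (Module.finrank ℝ E : ℝ) ≠ 0 := by simp [Module.finrank_pos.ne']
  field_simp
  linarith

theorem three_mul_integral_inner_sq_mul_inner_sq_uniformSphere {u w : E} (hu : ‖u‖ = 1)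
    (hw : ‖w‖ = 1) (huw : ⟪u, w⟫ = 0) :
    3 * ∫ x, ⟪(x : E), u⟫ ^ 2 * ⟪(x : E), w⟫ ^ 2 ∂uniformSphere E =
      ∫ x, ⟪(x : E), u⟫ ^ 4 ∂uniformSphere E := by
  set p := (√2)⁻¹ • (u + w)
  set q := (√2)⁻¹ • (u - w)
  have hunit {v : E} (hv : ‖v‖ ^ 2 = 2) : ‖(√2)⁻¹ • v‖ = 1 := by
    rw [norm_smul, ← Real.sqrt_sq (norm_nonneg v), hv, norm_inv,
      Real.norm_of_nonneg (by positivity), inv_mul_cancel₀ (by positivity)]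
  have hp : ‖p‖ = 1 := hunit (by rw [norm_add_sq_real, hu, hw, huw]; norm_num)
  have hq : ‖q‖ = 1 := hunit (by rw [norm_sub_sq_real, hu, hw, huw]; norm_num)
  have hpq : ∀ x : E, ⟪x, p⟫ ^ 4 + ⟪x, q⟫ ^ 4 =
      (⟪x, u⟫ ^ 4 + ⟪x, w⟫ ^ 4) / 2 + 3 * (⟪x, u⟫ ^ 2 * ⟪x, w⟫ ^ 2) := by
    intro x
    have h2 : (√2)⁻¹ ^ 4 = (1 / 4 : ℝ) := by
      rw [inv_pow, show (4 : ℕ) = 2 * 2 from rfl, pow_mul, Real.sq_sqrt zero_le_two]; norm_num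
    simp only [p, q, inner_smul_right, inner_add_right, inner_sub_right, mul_pow, h2]
    ring
  have hintegrated := integral_congr_ae (μ := uniformSphere E)
    (.of_forall fun x : sphere (0 : E) 1 => hpq x)
  rw [integral_add (integrable_uniformSphere (by fun_prop))
      (integrable_uniformSphere (by fun_prop)),
    integral_add (integrable_uniformSphere (by fun_prop)) (integrable_uniformSphere (by fun_prop)),
    integral_div,
    integral_add (integrable_uniformSphere (by fun_prop)) (integrable_uniformSphere (by fun_prop)),
    integral_const_mul] at hintegrated
  simp only [integral_comp_inner_uniformSphere (· ^ 4) hp hu,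
    integral_comp_inner_uniformSphere (· ^ 4) hq hu,
    integral_comp_inner_uniformSphere (· ^ 4) hw hu] at hintegrated
  linarith

theorem integral_inner_pow_four_uniformSphere {u : E} (hu : ‖u‖ = 1) :
    ∫ x, ⟪(x : E), u⟫ ^ 4 ∂uniformSphere E =
      3 / (Module.finrank ℝ E * (Module.finrank ℝ E + 2)) := by
  set b := stdOrthonormalBasis ℝ E
  set c := ∫ x, ⟪(x : E), u⟫ ^ 4 ∂uniformSphere E
  have hterm (i j) : ∫ x, ⟪(x : E), b i⟫ ^ 2 * ⟪(x : E), b j⟫ ^ 2 ∂uniformSphere E =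
      c / 3 + if i = j then 2 * c / 3 else 0 := by
    have hc : ∫ x, ⟪(x : E), b i⟫ ^ 4 ∂uniformSphere E = c :=
      integral_comp_inner_uniformSphere (· ^ 4) (b.orthonormal.1 i) hu
    by_cases hij : i = j
    · subst hij
      simp only [← pow_add, if_true]
      linarith
    · have := three_mul_integral_inner_sq_mul_inner_sq_uniformSphere (b.orthonormal.1 i)
        (b.orthonormal.1 j) (b.orthonormal.2 hij)
      simp only [hij, if_false]
      linarith
  have hsum : ∫ x, ∑ i, ∑ j, ⟪(x : E), b i⟫ ^ 2 * ⟪(x : E), b j⟫ ^ 2 ∂uniformSphere E = 1 := by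
    simp [← Finset.sum_mul_sum, b.sum_sq_inner_left]
  have hinner (i) : ∫ x, ∑ j, ⟪(x : E), b i⟫ ^ 2 * ⟪(x : E), b j⟫ ^ 2 ∂uniformSphere E =
      ∑ j, ∫ x, ⟪(x : E), b i⟫ ^ 2 * ⟪(x : E), b j⟫ ^ 2 ∂uniformSphere E :=
    integral_finsetSum _ fun j _ => integrable_uniformSphere (by fun_prop)
  rw [integral_finsetSum _ fun i _ => integrable_uniformSphere (by fun_prop)] at hsum
  simp only [hinner, hterm, Finset.sum_add_distrib, Finset.sum_ite_eq, Finset.mem_univ, if_true,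
    Finset.sum_const, Finset.card_univ, Fintype.card_fin, nsmul_eq_mul] at hsum
  have hn : (0 : ℝ) < Module.finrank ℝ E := by simp [Module.finrank_pos]
  field_simp
  linarith

variable {ι : Type*} {v : ι → E}

theorem integral_inner_sq_mul_inner_sq_uniformSphere [DecidableEq ι] (hv : Orthonormal ℝ v)
    (i j : ι) :
    ∫ x, ⟪(x : E), v i⟫ ^ 2 * ⟪(x : E), v j⟫ ^ 2 ∂uniformSphere E =
      (if i = j then 3 else 1) / (Module.finrank ℝ E * (Module.finrank ℝ E + 2)) := by
  have h4 := integral_inner_pow_four_uniformSphere (hv.1 i)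
  by_cases hij : i = j
  · subst hij
    simpa only [← pow_add, if_true] using h4
  · have := three_mul_integral_inner_sq_mul_inner_sq_uniformSphere (hv.1 i) (hv.1 j) (hv.2 hij)
    rw [if_neg hij]
    rw [h4, div_eq_mul_one_div 3] at this
    linarith

theorem integral_sum_mul_inner_sq_uniformSphere [Fintype ι] (hv : Orthonormal ℝ v) (c : ι → ℝ) :
    ∫ x, ∑ i, c i * ⟪(x : E), v i⟫ ^ 2 ∂uniformSphere E = (∑ i, c i) / Module.finrank ℝ E := by
  rw [integral_finsetSum _ fun i _ => integrable_uniformSphere (by fun_prop), Finset.sum_div]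
  simp only [integral_const_mul, integral_inner_sq_uniformSphere (hv.1 _), mul_one_div]

theorem integral_sum_mul_inner_sq_sq_uniformSphere [Fintype ι] (hv : Orthonormal ℝ v)
    (c : ι → ℝ) :
    ∫ x, (∑ i, c i * ⟪(x : E), v i⟫ ^ 2) ^ 2 ∂uniformSphere E =
      ((∑ i, c i) ^ 2 + 2 * ∑ i, c i ^ 2) /
        (Module.finrank ℝ E * (Module.finrank ℝ E + 2)) := by
  classical
  have hexpand (x : E) : (∑ i, c i * ⟪x, v i⟫ ^ 2) ^ 2 =
      ∑ i, ∑ j, c i * c j * (⟪x, v i⟫ ^ 2 * ⟪x, v j⟫ ^ 2) := by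
    rw [sq, Finset.sum_mul_sum]
    simp only [mul_mul_mul_comm]
  have hinner (i) :
      ∫ x, ∑ j, c i * c j * (⟪(x : E), v i⟫ ^ 2 * ⟪(x : E), v j⟫ ^ 2) ∂uniformSphere E =
      (∑ j, c i * c j * if i = j then 3 else 1) /
        (Module.finrank ℝ E * (Module.finrank ℝ E + 2)) := by
    rw [integral_finsetSum _ fun j _ => integrable_uniformSphere (by fun_prop), Finset.sum_div]
    simp only [integral_const_mul, integral_inner_sq_mul_inner_sq_uniformSphere hv, mul_div_assoc]
  simp only [hexpand]
  rw [integral_finsetSum _ fun i _ => integrable_uniformSphere (by fun_prop)]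
  simp only [hinner, ← Finset.sum_div]
  congr 1
  calc ∑ i, ∑ j, c i * c j * (if i = j then 3 else 1)
      = ∑ i, ∑ j, (c i * c j + if i = j then 2 * c i ^ 2 else 0) := by
        refine Finset.sum_congr rfl fun i _ => Finset.sum_congr rfl fun j _ => ?_
        split_ifs with hij
        · subst hij; ring
        · ring
    _ = (∑ i, c i) ^ 2 + 2 * ∑ i, c i ^ 2 := by
        simp only [Finset.sum_add_distrib, Finset.sum_ite_eq, Finset.mem_univ, if_true,
          ← Finset.mul_sum, sq, Finset.sum_mul_sum]

end uniformSphere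

theorem Matrix.dotProduct_mul_diagonal_mul_transpose_mulVec {n R : Type*} [Fintype n]
    [DecidableEq n] [CommSemiring R] (V : Matrix n n R) (d : n → R) (x : n → R) :
    x ⬝ᵥ (V * diagonal d * Vᵀ) *ᵥ x = ∑ i, d i * (Vᵀ *ᵥ x) i ^ 2 := by
  rw [← mulVec_mulVec, ← mulVec_mulVec, dotProduct_mulVec, ← mulVec_transpose, dotProduct]
  simp only [mulVec_diagonal]
  exact Finset.sum_congr rfl fun i _ => by ring

theorem EuclideanSpace.inner_toLp_row {m n : Type*} [Fintype n] (M : Matrix m n ℝ)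
    (x : EuclideanSpace ℝ n) (i : m) : ⟪x, WithLp.toLp 2 (M i)⟫ = (M *ᵥ x.ofLp) i := by
  rw [EuclideanSpace.inner_eq_star_dotProduct, star_trivial]
  rfl

theorem Matrix.orthonormal_toLp_row {n : Type*} [Fintype n] [DecidableEq n] {M : Matrix n n ℝ}
    (hM : M * Mᵀ = 1) : Orthonormal ℝ fun i => WithLp.toLp 2 (M i) := by
  rw [orthonormal_iff_ite]
  intro i j
  have hji := congr_fun (congr_fun hM j) i
  rw [mul_apply, one_apply] at hji
  simpa [EuclideanSpace.inner_toLp_row, mulVec, dotProduct, eq_comm] using hji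

theorem EuclideanSpace.sum_inner_toLp_row_sq {n : Type*} [Fintype n] [DecidableEq n]
    {M : Matrix n n ℝ} (hM : Mᵀ * M = 1) (x : EuclideanSpace ℝ n) :
    ∑ i, ⟪x, WithLp.toLp 2 (M i)⟫ ^ 2 = ‖x‖ ^ 2 := by
  rw [← real_inner_self_eq_norm_sq, EuclideanSpace.inner_eq_star_dotProduct, star_trivial]
  simpa [hM, EuclideanSpace.inner_toLp_row] using
    (dotProduct_mul_diagonal_mul_transpose_mulVec Mᵀ 1 x.ofLp).symm

/-- Let `A = V diag(λ) Vᵀ` with `V ∈ O(N)` and real eigenvalues `λ`, and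
`m = tr A / N`.  For `x` uniformly distributed on the real unit sphere
`S^(N-1)` and `X = ⟨x, Ax⟩`, one has `E[X] = m` and
`E[(X - m)²] = (2/(N(N+2))) ∑_j (λ_j - m)²`. -/
theorem stmt_12 (N : ℕ) (hN : 0 < N)
    (A V : Matrix (Fin N) (Fin N) ℝ) (lam : Fin N → ℝ)
    (hV : V ∈ Matrix.orthogonalGroup (Fin N) ℝ)
    (hA : A = V * Matrix.diagonal lam * Vᵀ) :
    let μS := (volume : Measure (EuclideanSpace ℝ (Fin N))).toSphere
    let μ : Measure (Metric.sphere (0 : EuclideanSpace ℝ (Fin N)) 1) :=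
      (μS Set.univ)⁻¹ • μS
    let m : ℝ := A.trace / N
    let X : Metric.sphere (0 : EuclideanSpace ℝ (Fin N)) 1 → ℝ := fun x =>
      (x : EuclideanSpace ℝ (Fin N)) ⬝ᵥ A.mulVec (x : EuclideanSpace ℝ (Fin N))
    (∫ x, X x ∂μ = m) ∧
    (∫ x, (X x - m) ^ 2 ∂μ) = 2 / (N * (N + 2)) * ∑ j, (lam j - m) ^ 2 := by
  intro μS μ m X
  have : NeZero N := ⟨hN.ne'⟩
  have hVV : V * Vᵀ = 1 := (mem_orthogonalGroup_iff (Fin N) ℝ).mp hV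
  have hVtV : Vᵀ * V = 1 := (mem_orthogonalGroup_iff' (Fin N) ℝ).mp hV
  set v : Fin N → EuclideanSpace ℝ (Fin N) := fun i => WithLp.toLp 2 (Vᵀ i)
  have hv : Orthonormal ℝ v := orthonormal_toLp_row (by rwa [transpose_transpose])
  have hX (x : EuclideanSpace ℝ (Fin N)) :
      x.ofLp ⬝ᵥ A *ᵥ x.ofLp = ∑ i, lam i * ⟪x, v i⟫ ^ 2 := by
    simp only [hA, dotProduct_mul_diagonal_mul_transpose_mulVec, v, EuclideanSpace.inner_toLp_row]
  have hsum (x : sphere (0 : EuclideanSpace ℝ (Fin N)) 1) :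
      ∑ i, ⟪(x : EuclideanSpace ℝ (Fin N)), v i⟫ ^ 2 = 1 := by
    simp [v, EuclideanSpace.sum_inner_toLp_row_sq (by rwa [transpose_transpose] : Vᵀᵀ * Vᵀ = 1)]
  have hm : m = (∑ i, lam i) / N := by
    simp only [m, hA, trace_mul_cycle, hVtV, Matrix.one_mul, trace_diagonal]
  have hXm (x : sphere (0 : EuclideanSpace ℝ (Fin N)) 1) :
      X x - m = ∑ i, (lam i - m) * ⟪(x : EuclideanSpace ℝ (Fin N)), v i⟫ ^ 2 := by
    simp only [X, hX, sub_mul, Finset.sum_sub_distrib, ← Finset.mul_sum, hsum, mul_one]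
  have hdev : ∑ i, (lam i - m) = 0 := by
    simp [Finset.sum_sub_distrib, hm, mul_div_cancel₀, hN.ne']
  change (∫ x, X x ∂uniformSphere _ = m) ∧ ∫ x, (X x - m) ^ 2 ∂uniformSphere _ = _
  simp only [hXm]
  refine ⟨?_, ?_⟩
  · simp only [X, hX]
    rw [integral_sum_mul_inner_sq_uniformSphere hv, finrank_euclideanSpace_fin, hm]
  · rw [integral_sum_mul_inner_sq_sq_uniformSphere hv, hdev, finrank_euclideanSpace_fin]
    ring
end
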